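/- The sequence defined by t₀ = 1 and t_{k+1} = (1 + √(1 + 4t_k²))/2 satisfies t_k ≥ (k+2)/2 for all k ≥ 0. -/

import Mathlib

/-!
Since `√(1 + 4t²) ≥ 2t`, each step of the recursion increases `t` by at least `1/2`,
so `t k ≥ t 0 + k/2 = (k + 2)/2`.
-/

lemma two_mul_le_sqrt_one_add_four_mul_sq (x : ℝ) : 2 * x ≤ √(1 + 4 * x ^ 2) :=
  Real.le_sqrt_of_sq_le (by nlinarith)

lemma add_half_le_fista_step (x : ℝ) : x + 1 / 2 ≤ (1 + √(1 + 4 * x ^ 2)) / 2 := by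
  linarith [two_mul_le_sqrt_one_add_four_mul_sq x]

lemma add_mul_le_of_forall_add_le_succ {t : ℕ → ℝ} {c : ℝ} (h : ∀ k, t k + c ≤ t (k + 1))
    (k : ℕ) : t 0 + k * c ≤ t k := by
  induction k with
  | zero => simp
  | succ k ih => push_cast; linarith [h k]

/-- The FISTA momentum sequence satisfies `t_k ≥ (k+2)/2`. -/
theorem fista_t_lower_bound (t : ℕ → ℝ) (h0 : t 0 = 1)
    (hrec : ∀ k, t (k+1) = (1 + Real.sqrt (1 + 4 * (t k)^2)) / 2) :
    ∀ k : ℕ, ((k : ℝ) + 2) / 2 ≤ t k := by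
  intro k
  have hstep : ∀ k, t k + 1 / 2 ≤ t (k + 1) := fun k => hrec k ▸ add_half_le_fista_step (t k)
  linarith [add_mul_le_of_forall_add_le_succ hstep k]
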